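/- arXiv:2504.11971 — 2 statements merged into one kernel-verified Lean document; each statement's English description precedes it below -/
import Mathlib

section
/- For any non-negative definite Hermitian matrix H and any antisymmetric matrix A (both n×n complex matrices), the trace tr(H A H̄ Ā) is real and satisfies tr(H A H̄ Ā) ≤ 0, where H̄ and Ā denote entrywise complex conjugation. -/
/-!
Writing `H = Bᴴ B`, hermiticity gives `H̄ = Hᵀ = Bᵀ B̄` and antisymmetry gives `Ā = -Aᴴ`.
By cyclicity of the trace, `tr(H A H̄ Ā) = -tr(M Mᴴ)` with `M = B A Bᵀ`, and `M Mᴴ` is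
positive semidefinite, so its trace is a non-negative real number.
-/

open Matrix
open scoped ComplexOrder

namespace Matrix

lemma PosSemidef.exists_eq_conjTranspose_mul_self {n 𝕜 : Type*} [Fintype n] [DecidableEq n]
    [RCLike 𝕜] {H : Matrix n n 𝕜} (hH : H.PosSemidef) : ∃ B : Matrix n n 𝕜, H = Bᴴ * B := by
  open scoped MatrixOrder in
  exact CStarAlgebra.nonneg_iff_eq_star_mul_self.mp hH.nonneg

lemma IsHermitian.map_star_eq_transpose {n R : Type*} [CommSemiring R] [StarRing R]
    {H : Matrix n n R} (hH : H.IsHermitian) : H.map (starRingEnd R) = Hᵀ := by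
  ext i j
  exact hH.apply j i

lemma map_star_eq_neg_conjTranspose_of_transpose_eq_neg {n R : Type*} [CommRing R] [StarRing R]
    {A : Matrix n n R} (hA : Aᵀ = -A) : A.map (starRingEnd R) = -Aᴴ := by
  rw [← conjTranspose_neg, ← hA, transpose_conjTranspose]
  rfl

lemma trace_conjTranspose_mul_self_mul_mul_transpose_mul_conjTranspose {m n R : Type*}
    [Fintype m] [Fintype n] [CommSemiring R] [StarRing R] (B : Matrix m n R) (A : Matrix n n R) :
    trace (Bᴴ * B * A * (Bᴴ * B)ᵀ * Aᴴ) = trace (B * A * Bᵀ * (B * A * Bᵀ)ᴴ) := by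
  simp only [transpose_mul, conjTranspose_mul, conjTranspose_transpose_eq_transpose_conjTranspose,
    Matrix.mul_assoc]
  rw [trace_mul_comm]
  simp only [Matrix.mul_assoc]

end Matrix

/-- For any non-negative definite Hermitian matrix `H` and antisymmetric matrix `A`,
`tr(H A H̄ Ā)` is real and non-positive. -/
theorem trace_HAHbarAbar_real_nonpos {n : ℕ}
    (H A : Matrix (Fin n) (Fin n) ℂ)
    (hH : H.PosSemidef)
    (hA : Aᵀ = -A) :
    ((H * A * H.map (starRingEnd ℂ) * A.map (starRingEnd ℂ)).trace).im = 0 ∧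
    ((H * A * H.map (starRingEnd ℂ) * A.map (starRingEnd ℂ)).trace).re ≤ 0 := by
  obtain ⟨B, hB⟩ := hH.exists_eq_conjTranspose_mul_self
  have htrace : (H * A * H.map (starRingEnd ℂ) * A.map (starRingEnd ℂ)).trace =
      -(B * A * Bᵀ * (B * A * Bᵀ)ᴴ).trace := by
    rw [hH.isHermitian.map_star_eq_transpose, map_star_eq_neg_conjTranspose_of_transpose_eq_neg hA,
      mul_neg, trace_neg, hB, trace_conjTranspose_mul_self_mul_mul_transpose_mul_conjTranspose]
  obtain ⟨hre, him⟩ :=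
    Complex.nonneg_iff.mp (posSemidef_self_mul_conjTranspose (B * A * Bᵀ)).trace_nonneg
  rw [htrace, Complex.neg_re, Complex.neg_im, ← him]
  exact ⟨neg_zero, neg_nonpos.mpr hre⟩
end

section
/- In double null coordinates, the quantity (r/2)(2 ∂_u r ∂_v r / Ω² + 1 + 4k²r²) obtained from the matrices Q and T of the spinorial quasilocal mass satisfies the identity (1/(16π))√(−tr(Q T⁻¹ Q̄ T̄⁻¹)) = (r/2)(2 ∂_u r ∂_v r / Ω² + 1 + 4k²r²), where Q = c·M₁ and T⁻¹ = d·M₂ with the explicit 4×4 matrices given by Q = (4r(2ab + Ω²(1+4k²r²))/Ω³)·[[a,0,0,−iκ],[0,a,iκ,0],[0,−iκ,−b,0],[iκ,0,0,−b]] and T⁻¹ = (πΩ/(ab + 2k²Ω²r²))·[[0,b,−iκ,0],[−b,0,0,−iκ],[iκ,0,0,a],[0,iκ,−a,0]], where a = ∂_u r, b = ∂_v r, κ = kΩr√2. -/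
open Matrix

noncomputable def kappaQL (Ω r k : ℝ) : ℂ := ((k * Ω * r * Real.sqrt 2 : ℝ) : ℂ)

/-- The matrix `Q` of the spinorial quasilocal mass in double null coordinates. -/
noncomputable def Qmat (a b Ω r k : ℝ) : Matrix (Fin 4) (Fin 4) ℂ :=
  ((4 * r * (2 * a * b + Ω ^ 2 * (1 + 4 * k ^ 2 * r ^ 2)) / Ω ^ 3 : ℝ) : ℂ) •
    !![(a : ℂ), 0, 0, -Complex.I * kappaQL Ω r k;
       0, (a : ℂ), Complex.I * kappaQL Ω r k, 0;
       0, -Complex.I * kappaQL Ω r k, ((-b : ℝ) : ℂ), 0;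
       Complex.I * kappaQL Ω r k, 0, 0, ((-b : ℝ) : ℂ)]

/-- The matrix `T⁻¹` of the spinorial quasilocal mass in double null coordinates. -/
noncomputable def Tinvmat (a b Ω r k : ℝ) : Matrix (Fin 4) (Fin 4) ℂ :=
  ((Real.pi * Ω / (a * b + 2 * k ^ 2 * Ω ^ 2 * r ^ 2) : ℝ) : ℂ) •
    !![0, (b : ℂ), -Complex.I * kappaQL Ω r k, 0;
       ((-b : ℝ) : ℂ), 0, 0, -Complex.I * kappaQL Ω r k;
       Complex.I * kappaQL Ω r k, 0, 0, (a : ℂ);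
       0, Complex.I * kappaQL Ω r k, ((-a : ℝ) : ℂ), 0]

/-!
Up to real scalars, `Q` and `T⁻¹` are the matrices `Qcore a b (iκ)` and `TinvCore a b (iκ)`,
whose product is `(ab + κ²) • J` for a fixed real `J` with `J² = -1`. Hence `Q T⁻¹ = μ • J` with
`μ = 8π (r/2)(2ab/Ω² + 1 + 4k²r²)` real; conjugation fixes `μ • J`, so
`Q T⁻¹ Q̄ T̄⁻¹ = (μ • J)² = -μ² • 1`, of trace `-4μ²`.
-/

section Core

variable {R : Type*} [CommRing R]

def Qcore (p q x : R) : Matrix (Fin 4) (Fin 4) R :=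
  !![p, 0, 0, -x; 0, p, x, 0; 0, -x, -q, 0; x, 0, 0, -q]

def TinvCore (p q x : R) : Matrix (Fin 4) (Fin 4) R :=
  !![0, q, -x, 0; -q, 0, 0, -x; x, 0, 0, p; 0, x, -p, 0]

def Jmat : Matrix (Fin 4) (Fin 4) R :=
  !![0, 1, 0, 0; -1, 0, 0, 0; 0, 0, 0, -1; 0, 0, 1, 0]

theorem Qcore_mul_TinvCore (p q x : R) :
    Qcore p q x * TinvCore p q x = (p * q - x ^ 2) • Jmat := by
  ext i j
  fin_cases i <;> fin_cases j <;>
    simp [Qcore, TinvCore, Jmat, Matrix.mul_apply, Fin.sum_univ_four] <;> ring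

theorem Jmat_mul_self : (Jmat : Matrix (Fin 4) (Fin 4) R) * Jmat = -1 := by
  ext i j
  fin_cases i <;> fin_cases j <;> simp [Jmat, Matrix.mul_apply, Fin.sum_univ_four]

theorem Jmat_map {S : Type*} [CommRing S] (f : R →+* S) :
    (Jmat : Matrix (Fin 4) (Fin 4) R).map f = Jmat := by
  ext i j
  fin_cases i <;> fin_cases j <;> simp [Jmat]

end Core


theorem kappaQL_sq (Ω r k : ℝ) : kappaQL Ω r k ^ 2 = ((2 * k ^ 2 * Ω ^ 2 * r ^ 2 : ℝ) : ℂ) := by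
  rw [kappaQL, ← Complex.ofReal_pow]
  congr 1
  rw [mul_pow, Real.sq_sqrt zero_le_two]
  ring

theorem Qmat_eq_smul_Qcore (a b Ω r k : ℝ) :
    Qmat a b Ω r k = ((4 * r * (2 * a * b + Ω ^ 2 * (1 + 4 * k ^ 2 * r ^ 2)) / Ω ^ 3 : ℝ) : ℂ) •
      Qcore (a : ℂ) b (Complex.I * kappaQL Ω r k) := by
  rw [Qmat, Qcore]
  simp only [neg_mul, Complex.ofReal_neg]

theorem Tinvmat_eq_smul_TinvCore (a b Ω r k : ℝ) :
    Tinvmat a b Ω r k = ((Real.pi * Ω / (a * b + 2 * k ^ 2 * Ω ^ 2 * r ^ 2) : ℝ) : ℂ) •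
      TinvCore (a : ℂ) b (Complex.I * kappaQL Ω r k) := by
  rw [Tinvmat, TinvCore]
  simp only [neg_mul, Complex.ofReal_neg]

theorem Qmat_mul_Tinvmat {a b Ω r k : ℝ} (hΩ : Ω ≠ 0)
    (hden : a * b + 2 * k ^ 2 * Ω ^ 2 * r ^ 2 ≠ 0) :
    Qmat a b Ω r k * Tinvmat a b Ω r k =
      ((8 * Real.pi * (r / 2) * (2 * a * b / Ω ^ 2 + 1 + 4 * k ^ 2 * r ^ 2) : ℝ) : ℂ) • Jmat := by
  rw [Qmat_eq_smul_Qcore, Tinvmat_eq_smul_TinvCore, smul_mul_smul_comm, Qcore_mul_TinvCore,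
    smul_smul, mul_pow, Complex.I_sq, kappaQL_sq]
  have hscalar : 4 * r * (2 * a * b + Ω ^ 2 * (1 + 4 * k ^ 2 * r ^ 2)) / Ω ^ 3 *
      (Real.pi * Ω / (a * b + 2 * k ^ 2 * Ω ^ 2 * r ^ 2)) * (a * b + 2 * k ^ 2 * Ω ^ 2 * r ^ 2) =
      8 * Real.pi * (r / 2) * (2 * a * b / Ω ^ 2 + 1 + 4 * k ^ 2 * r ^ 2) := by
    rw [mul_assoc, div_mul_cancel₀ _ hden]
    field_simp
    ring
  rw [← hscalar]
  congr 1
  push_cast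
  ring

theorem neg_trace_mul_map_conj_of_eq_smul_Jmat {A : Matrix (Fin 4) (Fin 4) ℂ} {μ : ℝ}
    (hA : A = (μ : ℂ) • Jmat) : -(A * A.map (starRingEnd ℂ)).trace = ((4 * μ ^ 2 : ℝ) : ℂ) := by
  subst hA
  rw [Matrix.map_smul' _ _ _ (map_mul _), Complex.conj_ofReal, Jmat_map, smul_mul_smul_comm,
    Jmat_mul_self]
  simp only [smul_neg, trace_neg, trace_smul, trace_one, Fintype.card_fin, smul_eq_mul, neg_neg]
  push_cast
  ring

theorem spherical_trace_computation_general (a b Ω r k : ℝ)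
    (hΩ : 0 < Ω)
    (hden : a * b + 2 * k ^ 2 * Ω ^ 2 * r ^ 2 ≠ 0) :
    -(Qmat a b Ω r k * Tinvmat a b Ω r k * (Qmat a b Ω r k).map (starRingEnd ℂ) *
        (Tinvmat a b Ω r k).map (starRingEnd ℂ)).trace =
      (((16 * Real.pi) ^ 2 * (r / 2) ^ 2 *
        (2 * a * b / Ω ^ 2 + 1 + 4 * k ^ 2 * r ^ 2) ^ 2 : ℝ) : ℂ) := by
  rw [mul_assoc _ ((Qmat a b Ω r k).map _), ← Matrix.map_mul,
    neg_trace_mul_map_conj_of_eq_smul_Jmat (Qmat_mul_Tinvmat hΩ.ne' hden)]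
  congr 1
  ring

/-- Spherically symmetric case: with `Q` and `T⁻¹` as above (`a = ∂_u r`, `b = ∂_v r`,
`κ = kΩr√2`), one has `−tr(Q T⁻¹ Q̄ T̄⁻¹) = (16π)² (r/2)² (2ab/Ω² + 1 + 4k²r²)²`. -/
theorem spherical_trace_computation (a b Ω r k : ℝ)
    (hΩ : 0 < Ω) (hr : 0 < r) (hk : 0 < k)
    (hden : a * b + 2 * k ^ 2 * Ω ^ 2 * r ^ 2 ≠ 0) :
    -(Qmat a b Ω r k * Tinvmat a b Ω r k * (Qmat a b Ω r k).map (starRingEnd ℂ) *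
        (Tinvmat a b Ω r k).map (starRingEnd ℂ)).trace =
      (((16 * Real.pi) ^ 2 * (r / 2) ^ 2 *
        (2 * a * b / Ω ^ 2 + 1 + 4 * k ^ 2 * r ^ 2) ^ 2 : ℝ) : ℂ) :=
  spherical_trace_computation_general a b Ω r k hΩ hden
end
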